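/- Let n ≥ 13 be an integer and let B be a Steiner triple system of order n: a family of 3-element subsets (blocks) of {1,...,n} such that every pair of distinct elements of {1,...,n} is contained in exactly one block. Then B is a resolving set for the Kneser graph K(n,3), and consequently β(K(n,3)) ≤ n(n−1)/6. -/

import Mathlib

/-- The Johnson graph `J(n,k)`: vertices are the `k`-element subsets of `{1,...,n}`,
two vertices adjacent iff their intersection has `k-1` elements. -/
def johnsonGraph (n k : ℕ) : SimpleGraph {s : Finset (Fin n) // s.card = k} where
  Adj U W := U ≠ W ∧ (U.1 ∩ W.1).card = k - 1
  symm := by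
    constructor
    intro U W h
    exact ⟨h.1.symm, by rw [Finset.inter_comm]; exact h.2⟩
  loopless := by
    constructor
    intro U h
    exact h.1 rfl

/-- The Kneser graph `K(n,k)`: vertices are the `k`-element subsets of `{1,...,n}`,
two vertices adjacent iff the corresponding subsets are disjoint. -/
def kneserGraph (n k : ℕ) : SimpleGraph {s : Finset (Fin n) // s.card = k} where
  Adj U W := U ≠ W ∧ Disjoint U.1 W.1
  symm := by
    constructor
    intro U W h
    exact ⟨h.1.symm, h.2.symm⟩
  loopless := by
    constructor
    intro U h
    exact h.1 rfl

/-- A set `S` of vertices is a resolving set for `G` if every pair of distinct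
vertices is resolved by some vertex of `S`, i.e. is at different distances from it. -/
def resolvingSet {V : Type*} (G : SimpleGraph V) (S : Set V) : Prop :=
  ∀ u v : V, u ≠ v → ∃ x ∈ S, G.dist u x ≠ G.dist v x

/-- The metric dimension `β(G)`: the minimum cardinality of a resolving set for `G`. -/
noncomputable def metricDim {V : Type*} (G : SimpleGraph V) : ℕ :=
  sInf {m | ∃ S : Finset V, resolvingSet G ↑S ∧ S.card = m}

/-!
If `x ∈ U \ W`, a block through `x` that is disjoint from `W` is adjacent to `W` in `K(n,3)` but
not to `U`, so it resolves the pair. Such a block exists: the blocks through `x` meeting `W` are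
at most `3` (one per point of `W`), so together with `x` they cover at most `10 < n` points, and
the block through `x` and an uncovered point avoids `W`. Counting the pairs inside blocks gives
`3 |B| = n (n - 1) / 2`.
-/

open Finset

namespace SimpleGraph

variable {V : Type*} {G : SimpleGraph V} {u v x : V}

theorem dist_ne_of_adj_of_not_adj (hv : G.Adj v x) (hu : ¬G.Adj u x) :
    G.dist u x ≠ G.dist v x := by
  rw [dist_eq_one_iff_adj.2 hv]
  exact mt dist_eq_one_iff_adj.1 hu

end SimpleGraph

theorem metricDim_le_card {V : Type*} {G : SimpleGraph V} {S : Finset V}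
    (hS : resolvingSet G ↑S) : metricDim G ≤ #S :=
  Nat.sInf_le ⟨S, hS, rfl⟩

section SteinerSystem

variable {α : Type*} {B : Finset (Finset α)}
  (hB : ∀ p q : α, p ≠ q → ∃! b, b ∈ B ∧ p ∈ b ∧ q ∈ b)
include hB

theorem eq_of_mem_block {p q : α} {b₁ b₂ : Finset α} (hpq : p ≠ q) (hb₁ : b₁ ∈ B)
    (hp₁ : p ∈ b₁) (hq₁ : q ∈ b₁) (hb₂ : b₂ ∈ B) (hp₂ : p ∈ b₂) (hq₂ : q ∈ b₂) :
    b₁ = b₂ :=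
  (hB p q hpq).unique ⟨hb₁, hp₁, hq₁⟩ ⟨hb₂, hp₂, hq₂⟩

variable [DecidableEq α]

theorem card_blocks_through_meeting_le {x : α} {W : Finset α} (hx : x ∉ W) :
    #{b ∈ B | x ∈ b ∧ ¬Disjoint b W} ≤ #W := by
  refine card_le_card_of_forall_subsingleton (fun b w ↦ w ∈ b) (fun b hb ↦ ?_) ?_
  · obtain ⟨w, hwb, hwW⟩ := not_disjoint_iff.1 (mem_filter.1 hb).2.2
    exact ⟨w, hwW, hwb⟩
  · intro w hw b₁ hb₁ b₂ hb₂
    simp only [mem_filter] at hb₁ hb₂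
    exact eq_of_mem_block hB (ne_of_mem_of_not_mem hw hx).symm hb₁.1.1 hb₁.1.2.1 hb₁.2
      hb₂.1.1 hb₂.1.2.1 hb₂.2

theorem exists_block_disjoint [Fintype α] {k : ℕ} (hcard : ∀ b ∈ B, #b ≤ k) {x : α}
    {W : Finset α} (hx : x ∉ W) (hW : #W * k + 1 < Fintype.card α) :
    ∃ b ∈ B, x ∈ b ∧ Disjoint b W := by
  set covered := {b ∈ B | x ∈ b ∧ ¬Disjoint b W}.biUnion id
  have hcovered : #covered ≤ #W * k :=
    calc #covered ≤ #{b ∈ B | x ∈ b ∧ ¬Disjoint b W} * k :=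
          card_biUnion_le_card_mul _ _ _ fun b hb ↦ hcard b (mem_filter.1 hb).1
      _ ≤ #W * k := Nat.mul_le_mul_right k (card_blocks_through_meeting_le hB hx)
  obtain ⟨z, -, hz⟩ : ∃ z ∈ univ, z ∉ insert x covered :=
    exists_mem_notMem_of_card_lt_card <| by
      rw [card_univ]; exact (card_insert_le _ _).trans_lt (by omega)
  obtain ⟨hzx, hz⟩ := not_or.1 (mem_insert.not.1 hz)
  obtain ⟨b, ⟨hb, hxb, hzb⟩, -⟩ := hB x z (Ne.symm hzx)
  refine ⟨b, hb, hxb, by_contra fun hbW ↦ hz ?_⟩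
  exact mem_biUnion.2 ⟨b, mem_filter.2 ⟨hb, hxb, hbW⟩, hzb⟩

theorem sum_choose_two_card_blocks [Fintype α] :
    ∑ b ∈ B, (#b).choose 2 = (Fintype.card α).choose 2 := by
  have hpairs : univ.powersetCard 2 = B.biUnion (powersetCard 2) := by
    ext p
    simp only [mem_powersetCard, subset_univ, true_and, mem_biUnion]
    refine ⟨fun hp ↦ ?_, fun ⟨_, _, _, hp⟩ ↦ hp⟩
    obtain ⟨a, c, hac, rfl⟩ := card_eq_two.1 hp
    obtain ⟨b, ⟨hb, ha, hc⟩, -⟩ := hB a c hac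
    exact ⟨b, hb, insert_subset ha (singleton_subset_iff.2 hc), hp⟩
  have hdisj : (B : Set (Finset α)).PairwiseDisjoint (powersetCard 2) := by
    intro b₁ hb₁ b₂ hb₂ hne
    refine disjoint_left.2 fun p hp₁ hp₂ ↦ hne ?_
    obtain ⟨hp₁, hp⟩ := mem_powersetCard.1 hp₁
    obtain ⟨a, c, hac, rfl⟩ := card_eq_two.1 hp
    have hp₂ := (mem_powersetCard.1 hp₂).1
    exact eq_of_mem_block hB hac hb₁ (hp₁ (by simp)) (hp₁ (by simp)) hb₂ (hp₂ (by simp))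
      (hp₂ (by simp))
  rw [← card_univ, ← card_powersetCard, hpairs,
    card_biUnion hdisj]
  simp only [card_powersetCard]

end SteinerSystem

theorem kneserGraph_resolvingSet_of_steiner {n k : ℕ} {B : Finset (Finset (Fin n))}
    (hcard : ∀ b ∈ B, #b = k) (hB : ∀ p q : Fin n, p ≠ q → ∃! b, b ∈ B ∧ p ∈ b ∧ q ∈ b)
    (hk : k * k + 1 < n) : resolvingSet (kneserGraph n k) {X | X.1 ∈ B} := by
  intro U W hUW
  obtain ⟨x, hxU, hxW⟩ : ∃ x ∈ U.1, x ∉ W.1 := by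
    by_contra! h
    exact hUW (Subtype.ext (eq_of_subset_of_card_le h (by rw [U.2, W.2])))
  obtain ⟨b, hb, hxb, hbW⟩ := exists_block_disjoint hB (fun b hb ↦ (hcard b hb).le) hxW
    (by rwa [W.2, Fintype.card_fin])
  refine ⟨⟨b, hcard b hb⟩, hb, SimpleGraph.dist_ne_of_adj_of_not_adj ?_ ?_⟩
  · exact ⟨fun h ↦ hxW (congrArg Subtype.val h ▸ hxb), hbW.symm⟩
  · exact fun h ↦ disjoint_left.1 h.2 hxU hxb

/-- For `n ≥ 13`, the blocks of a Steiner triple system of order `n` form a resolving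
set for the Kneser graph `K(n,3)`; consequently `β(K(n,3)) ≤ n(n−1)/6`. -/
theorem steiner_triple_system_resolving_kneser (n : ℕ) (hn : 13 ≤ n)
    (B : Finset (Finset (Fin n)))
    (hcard : ∀ b ∈ B, b.card = 3)
    (hsteiner : ∀ p q : Fin n, p ≠ q → ∃! b, b ∈ B ∧ p ∈ b ∧ q ∈ b) :
    resolvingSet (kneserGraph n 3) {X | X.1 ∈ B} ∧
    metricDim (kneserGraph n 3) ≤ n * (n - 1) / 6 := by
  have hres := kneserGraph_resolvingSet_of_steiner hcard hsteiner (by omega)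
  have hcount : #B * 3 = n * (n - 1) / 2 := by
    have hsum := sum_choose_two_card_blocks hsteiner
    rw [sum_congr rfl fun b hb ↦ by rw [hcard b hb], sum_const, smul_eq_mul,
      Fintype.card_fin] at hsum
    rw [← Nat.choose_two_right, ← hsum]
    rfl
  refine ⟨hres, ?_⟩
  calc metricDim (kneserGraph n 3) ≤ #(B.subtype fun s ↦ #s = 3) :=
        metricDim_le_card (by convert hres; ext; simp)
    _ ≤ #B := by rw [card_subtype]; exact card_filter_le _ _
    _ ≤ n * (n - 1) / 6 := by omega
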